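/- For every positive integer c, there exists a positive integer n(c) such that the Mycielski graph M_{n(c)} has path-chromatic number larger than c. -/

import Mathlib

open SimpleGraph

universe u
variable {V : Type u}

/-- Closed neighborhood of a vertex set. -/
def closedNbhd (G : SimpleGraph V) (U : Set V) : Set V :=
  U ∪ {v | ∃ u ∈ U, G.Adj u v}

/-- Bag `X_ℓ = N[{v_1,…,v_ℓ}] \ {v_1,…,v_{ℓ-1}}` of the enumeration `σ`. -/
def bagX {n : ℕ} (G : SimpleGraph V) (σ : Fin n ≃ V) (ℓ : Fin n) : Set V :=
  closedNbhd G {v | ∃ j ≤ ℓ, v = σ j} \ {v | ∃ j < ℓ, v = σ j}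

/-- Chromatic number of the subgraph induced by `S`. -/
noncomputable def chrom (G : SimpleGraph V) (S : Set V) : ℕ :=
  sInf {k | (G.induce S).Colorable k}

/-- Chromatic number of the path-decomposition `P_σ^G`. -/
noncomputable def decompChrom {n : ℕ} (G : SimpleGraph V) (σ : Fin n ≃ V) : ℕ :=
  sInf {k | ∀ ℓ, (G.induce (bagX G σ ℓ)).Colorable k}

/-- `B` is a path-decomposition of `G`. -/
def IsPathDecomp (G : SimpleGraph V) {s : ℕ} (B : Fin s → Set V) : Prop :=
  (∀ v, ∃ t, v ∈ B t) ∧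
  (∀ u v, G.Adj u v → ∃ t, u ∈ B t ∧ v ∈ B t) ∧
  (∀ v (t₁ t₂ t₃ : Fin s), t₁ ≤ t₂ → t₂ ≤ t₃ → v ∈ B t₁ → v ∈ B t₃ → v ∈ B t₂)

/-- Path-chromatic number. -/
noncomputable def pathChromatic (G : SimpleGraph V) : ℕ :=
  sInf {k | ∃ (s : ℕ) (B : Fin s → Set V), IsPathDecomp G B ∧
    ∀ t, (G.induce (B t)).Colorable k}

/-- `(T, B)` is a tree-decomposition of `G`. -/
def IsTreeDecomp {ι : Type u} (G : SimpleGraph V) (T : SimpleGraph ι) (B : ι → Set V) : Prop :=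
  T.IsTree ∧
  (∀ v, ∃ t, v ∈ B t) ∧
  (∀ u v, G.Adj u v → ∃ t, u ∈ B t ∧ v ∈ B t) ∧
  (∀ v, (T.induce {t | v ∈ B t}).Connected)

/-- Tree-chromatic number. -/
noncomputable def treeChromatic (G : SimpleGraph V) : ℕ :=
  sInf {k | ∃ (ι : Type u) (T : SimpleGraph ι) (B : ι → Set V),
    IsTreeDecomp G T B ∧ ∀ t, (G.induce (B t)).Colorable k}

/-- A special enumeration. -/
def IsSpecial {n : ℕ} (G : SimpleGraph V) (σ : Fin n ≃ V) : Prop :=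
  decompChrom G σ = pathChromatic G ∧
  ∀ i : Fin n, chrom G (bagX G σ i) = pathChromatic G →
    ∀ j : Fin n, j < i → ¬ G.Adj (σ j) (σ i)

/-- The graph `R_m(G)`; the vertex `(i, none)` plays the role of `(i, v₀)`. -/
def Rm (G : SimpleGraph V) (m : ℕ) : SimpleGraph (Fin m × Option V) :=
  SimpleGraph.fromRel (fun p q =>
    (p.1 = q.1 ∧ p.2 = none) ∨
    (p.1 ≠ q.1 ∧ ∃ u v, p.2 = some u ∧ q.2 = some v ∧ G.Adj u v))

/-- `[I, U] = { (i, v) : i ∈ I, v ∈ U }` inside `R_m(G)`. -/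
def box {m : ℕ} (I : Set (Fin m)) (U : Set V) : Set (Fin m × Option V) :=
  {p | p.1 ∈ I ∧ ∃ v ∈ U, p.2 = some v}

/-- Index of the first vertex in the enumeration `μ` satisfying `P`. -/
noncomputable def firstIdx {N : ℕ} {W : Type*} (μ : Fin N ≃ W) (P : W → Prop) : ℕ :=
  sInf {ℓ : ℕ | ∃ h : ℓ < N, P (μ ⟨ℓ, h⟩)}

/-- The cycle `C_n`: `v_j ~ v_{j'}` iff `|j - j'| ∈ {1, n-1}`. -/
def cyc (n : ℕ) : SimpleGraph (Fin n) :=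
  SimpleGraph.fromRel (fun a b => (b : ℕ) - (a : ℕ) = 1 ∨ (b : ℕ) - (a : ℕ) = n - 1)

/-- The Mycielskian of a graph. -/
def mycielskian (G : SimpleGraph V) : SimpleGraph (Option (V ⊕ V)) :=
  SimpleGraph.fromRel (fun a b =>
    match a, b with
    | some (Sum.inl u), some (Sum.inl v) => G.Adj u v
    | some (Sum.inr u), some (Sum.inl v) => G.Adj u v
    | none, some (Sum.inr _) => True
    | _, _ => False)

/-- Vertex types and graphs of the Mycielski family: `MycS 2` is a single edge. -/
def MycS : ℕ → Σ W : Type, SimpleGraph W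
  | 0 => ⟨Empty, ⊥⟩
  | 1 => ⟨Empty, ⊥⟩
  | 2 => ⟨Fin 2, ⊤⟩
  | (n + 3) => ⟨Option ((MycS (n + 2)).1 ⊕ (MycS (n + 2)).1), mycielskian (MycS (n + 2)).2⟩

/-- The vertex type of the `k`-Mycielski graph. -/
def MycV (k : ℕ) : Type := (MycS k).1

/-- The `k`-Mycielski graph `M_k`. -/
def Myc (k : ℕ) : SimpleGraph (MycV k) := (MycS k).2

/-!
Order the vertices of a finite graph `G` by an injective `pos : α → ℕ`. The cut at `k` is hard at
level `a` if the frontier `N({pos ≤ k}) ∩ {k ≤ pos}` is not `a`-colourable while the suffix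
`{k ≤ pos}` and the neighbourhood `N({pos ≤ k})` are not `(a + 1)`-colourable. If every ordering of
`G` has a hard cut and `G` maps homomorphically into `Γ`, then `χ_P(Γ) > a`: order `G` by the last
bag containing the image of each vertex; an edge from the prefix to a frontier vertex `w` lies in a
bag no later than the last bag of the first suffix vertex `w₀`, and `w` also lies in its own last
bag, so by interpolation the whole frontier lies in the last bag of `w₀`.

`M₃ = C₅` has a hard cut at level `0` for every ordering. If `G` has hard cuts at level `a` and
`χ(G) > a + 2`, then `R_m(G)`, `m = 4|G| + 20`, has hard cuts at level `a + 1` and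
`χ(R_m(G)) > a + 3`. To find the cut, order `G` by the time at which a second copy of each vertex
is placed and take a hard cut `L` of that order. At most `2|G|`
copies contain a suffix vertex placed by time `L`; the remaining fresh copies, their apexes and the
Mycielski-type configurations they span lift the three conditions to `R_m(G)` at time `L`, or at
an earlier time if every fresh apex is already placed by `L`. Finally, `R_t(H)` maps into
`M_{s+t}` whenever `H` maps into `M_s`, one Mycielski step per copy.
-/

open Function

namespace SimpleGraph

variable {α β : Type*} {H : SimpleGraph α} {G : SimpleGraph β}

def openNbhd (G : SimpleGraph β) (S : Set β) : Set β := {v | ∃ u ∈ S, G.Adj u v}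

lemma Colorable.of_hom_induce (F : H →g G) {S : Set β} (hS : ∀ v, F v ∈ S) {k : ℕ}
    (h : (G.induce S).Colorable k) : H.Colorable k :=
  h.of_hom ⟨fun v => ⟨F v, hS v⟩, F.map_adj⟩

lemma nonempty_of_not_colorable_induce {S : Set β} {k : ℕ} (h : ¬ (G.induce S).Colorable k) :
    S.Nonempty := by
  by_contra hS
  rw [Set.not_nonempty_iff_eq_empty] at hS
  subst hS
  exact h (Colorable.of_isEmpty k)

lemma not_colorable_one_induce_of_adj {S : Set β} {u v : β}
    (hu : u ∈ S) (hv : v ∈ S) (h : G.Adj u v) : ¬ (G.induce S).Colorable 1 := fun ⟨C⟩ =>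
  C.valid (show (G.induce S).Adj ⟨u, hu⟩ ⟨v, hv⟩ from h) (Subsingleton.elim _ _)

end SimpleGraph

section Mycielskian

variable {α : Type*} {H : SimpleGraph α} {u v : α}

@[simp] lemma mycielskian_adj_inl_inl :
    (mycielskian H).Adj (some (.inl u)) (some (.inl v)) ↔ H.Adj u v := by
  simpa [mycielskian, H.adj_comm] using Adj.ne

@[simp] lemma mycielskian_adj_inl_inr :
    (mycielskian H).Adj (some (.inl u)) (some (.inr v)) ↔ H.Adj u v := by
  simp [mycielskian, H.adj_comm]

@[simp] lemma mycielskian_adj_inr_inl :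
    (mycielskian H).Adj (some (.inr u)) (some (.inl v)) ↔ H.Adj u v := by
  simp [mycielskian]

@[simp] lemma mycielskian_adj_inr_inr :
    ¬ (mycielskian H).Adj (some (.inr u)) (some (.inr v)) := by
  simp [mycielskian]

@[simp] lemma mycielskian_adj_none_inr : (mycielskian H).Adj none (some (.inr v)) := by
  simp [mycielskian]

@[simp] lemma mycielskian_adj_inr_none : (mycielskian H).Adj (some (.inr v)) none := by
  simp [mycielskian]

@[simp] lemma mycielskian_adj_none_inl : ¬ (mycielskian H).Adj none (some (.inl v)) := by
  simp [mycielskian]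

@[simp] lemma mycielskian_adj_inl_none : ¬ (mycielskian H).Adj (some (.inl v)) none := by
  simp [mycielskian]

lemma SimpleGraph.Colorable.of_mycielskian {k : ℕ} (h : (mycielskian H).Colorable (k + 1)) :
    H.Colorable k := by
  obtain ⟨C⟩ := h
  let ψ : α → Fin (k + 1) := fun v =>
    if C (some (.inl v)) = C none then C (some (.inr v)) else C (some (.inl v))
  have hψ : ∀ v, ψ v ≠ C none := by
    intro v
    by_cases hv : C (some (.inl v)) = C none
    · simpa [ψ, hv] using C.valid (mycielskian_adj_inr_none (v := v))
    · simp [ψ, hv]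
  have hproper : ∀ {u v}, H.Adj u v → ψ u ≠ ψ v := by
    intro u v huv
    by_cases hu : C (some (.inl u)) = C none <;> by_cases hv : C (some (.inl v)) = C none <;>
      simp only [ψ, hu, hv, if_true, if_false]
    · exact absurd (hu.trans hv.symm) (C.valid ((mycielskian_adj_inl_inl).2 huv))
    · exact C.valid ((mycielskian_adj_inr_inl).2 huv)
    · exact C.valid ((mycielskian_adj_inl_inr).2 huv)
    · exact C.valid ((mycielskian_adj_inl_inl).2 huv)
  have := (Coloring.mk (fun v => (⟨ψ v, hψ v⟩ : {c // c ≠ C none}))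
    fun huv h => hproper huv (congrArg Subtype.val h)).colorable
  simpa [Fintype.card_subtype_compl] using this

instance [DecidableRel H.Adj] :
    DecidableRel (mycielskian H).Adj
  | some (.inl _), some (.inl _) => decidable_of_iff _ mycielskian_adj_inl_inl.symm
  | some (.inl _), some (.inr _) => decidable_of_iff _ mycielskian_adj_inl_inr.symm
  | some (.inr _), some (.inl _) => decidable_of_iff _ mycielskian_adj_inr_inl.symm
  | some (.inr _), some (.inr _) => isFalse mycielskian_adj_inr_inr
  | none, some (.inr _) => isTrue mycielskian_adj_none_inr
  | some (.inr _), none => isTrue mycielskian_adj_inr_none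
  | none, some (.inl _) => isFalse mycielskian_adj_none_inl
  | some (.inl _), none => isFalse mycielskian_adj_inl_none
  | none, none => isFalse (mycielskian H).irrefl

end Mycielskian

section Rm

variable {α : Type*} {G : SimpleGraph α} {m : ℕ} {i j : Fin m} {u v : α}

@[simp] lemma rm_adj_none_some : (Rm G m).Adj (i, none) (j, some v) ↔ i = j := by
  simp [Rm]

@[simp] lemma rm_adj_some_none : (Rm G m).Adj (i, some u) (j, none) ↔ i = j := by
  simp [Rm, eq_comm]

@[simp] lemma rm_adj_some_some :
    (Rm G m).Adj (i, some u) (j, some v) ↔ i ≠ j ∧ G.Adj u v := by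
  rw [Rm, fromRel_adj]
  constructor
  · rintro ⟨-, (⟨-, ⟨⟩⟩ | ⟨hij, _, _, ⟨⟩, ⟨⟩, h⟩) | (⟨-, ⟨⟩⟩ | ⟨hji, _, _, ⟨⟩, ⟨⟩, h⟩)⟩
    · exact ⟨hij, h⟩
    · exact ⟨Ne.symm hji, h.symm⟩
  · rintro ⟨hij, h⟩
    exact ⟨fun hc => hij (congrArg Prod.fst hc), .inl (.inr ⟨hij, u, v, rfl, rfl, h⟩)⟩

@[simp] lemma rm_adj_none_none : ¬ (Rm G m).Adj (i, none) (j, none) := by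
  rintro ⟨hne, (⟨rfl, -⟩ | ⟨-, _, _, ⟨⟩, -⟩) | (⟨rfl, -⟩ | ⟨-, _, _, ⟨⟩, -⟩)⟩ <;> exact hne rfl

end Rm

section Copies

variable {α : Type*} [Fintype α] {G : SimpleGraph α} {m : ℕ} {S : Set (Fin m × Option α)}
  {W : Set α} {k : ℕ}

lemma Rm.not_colorable_of_copies (C : Finset (Fin m)) (hC : Fintype.card α ≤ C.card)
    (hS : ∀ i ∈ C, ∀ w ∈ W, (i, some w) ∈ S) (hW : ¬ (G.induce W).Colorable k) :
    ¬ ((Rm G m).induce S).Colorable k := by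
  obtain ⟨ρ⟩ := Function.Embedding.nonempty_of_card_le (hC.trans_eq (Fintype.card_coe C).symm)
  refine fun h => hW (Colorable.of_hom_induce (G := Rm G m)
    ⟨fun w : W => (ρ w, some (w : α)), ?_⟩ (fun w => hS _ (ρ w).2 _ w.2) h)
  intro w w' hww'
  exact rm_adj_some_some.2
    ⟨fun hρ => hww'.ne (Subtype.ext (ρ.injective (Subtype.ext hρ))), hww'⟩

lemma Rm.not_colorable_succ_of_copies (C : Finset (Fin m)) (hC : Fintype.card α ≤ C.card)
    (j : Fin m) (hj : j ∉ C) (hS : ∀ i ∈ C, ∀ w ∈ W, (i, some w) ∈ S)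
    (hshadow : ∀ w ∈ W, (j, some w) ∈ S) (hapex : (j, none) ∈ S)
    (hW : ¬ (G.induce W).Colorable k) : ¬ ((Rm G m).induce S).Colorable (k + 1) := by
  obtain ⟨ρ⟩ := Function.Embedding.nonempty_of_card_le (hC.trans_eq (Fintype.card_coe C).symm)
  have hρj : ∀ w, (ρ w : Fin m) ≠ j := fun w h => hj (h ▸ (ρ w).2)
  let F : Option (W ⊕ W) → Fin m × Option α
    | none => (j, none)
    | some (.inl w) => (ρ w, some w)
    | some (.inr w) => (j, some w)
  refine fun h => hW (Colorable.of_mycielskian (Colorable.of_hom_induce ⟨F, ?_⟩ ?_ h))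
  · rintro (_ | w | w) (_ | w' | w') hww' <;> simp_all [F, Ne.symm (hρj _)]
    exact hww'.ne
  · rintro (_ | w | w)
    exacts [hapex, hS _ (ρ w).2 _ w.2, hshadow _ w.2]

lemma Rm.not_colorable_succ (hm : Fintype.card α < m) (hχ : ¬ G.Colorable k) :
    ¬ (Rm G m).Colorable (k + 1) := by
  let j : Fin m := ⟨0, by omega⟩
  refine fun h => Rm.not_colorable_succ_of_copies (S := Set.univ) (W := Set.univ)
    (Finset.univ.erase j) ?_ j (Finset.notMem_erase j _) (fun _ _ _ _ => trivial)
    (fun _ _ => trivial) trivial (fun h' => hχ (h'.of_hom (induceUnivIso G).symm.toHom))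
    (h.of_hom (induceUnivIso _).toHom)
  rw [Finset.card_erase_of_mem (Finset.mem_univ j), Finset.card_univ, Fintype.card_fin]
  omega

end Copies

section HardFrontier

variable {α : Type*}

structure IsHardCut (G : SimpleGraph α) (pos : α → ℕ) (a k : ℕ) : Prop where
  frontier : ¬ (G.induce (G.openNbhd {v | pos v ≤ k} ∩ {v | k ≤ pos v})).Colorable a
  suffix : ¬ (G.induce {v | k ≤ pos v}).Colorable (a + 1)
  neighbors : ¬ (G.induce (G.openNbhd {v | pos v ≤ k})).Colorable (a + 1)

def HasHardFrontier (G : SimpleGraph α) (a : ℕ) : Prop :=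
  ∀ pos : α → ℕ, Injective pos → ∃ k, IsHardCut G pos a k

end HardFrontier

open Finset in
lemma Finset.exists_card_filter_le_eq {β : Type*} [DecidableEq β] (f : β → ℕ) (s : Finset β)
    (hf : Set.InjOn f s) {r : ℕ} (hr : 0 < r) (hrs : r ≤ #s) :
    ∃ x ∈ s, #{y ∈ s | f y ≤ f x} = r := by
  induction s using Finset.induction_on_max_value f generalizing r with
  | empty => simp at hrs; omega
  | insert a s ha hmax ih =>
    rw [card_insert_of_notMem ha] at hrs
    rcases hrs.lt_or_eq with hrs | rfl
    · obtain ⟨x, hx, hcount⟩ := ih (hf.mono (subset_insert a s)) hr (by omega)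
      have hax : ¬ f a ≤ f x := fun h => ha <|
        hf (mem_insert_self a s) (mem_insert_of_mem hx) (h.antisymm (hmax x hx)) ▸ hx
      exact ⟨x, mem_insert_of_mem hx, by rw [filter_insert, if_neg hax, hcount]⟩
    · refine ⟨a, mem_insert_self a s, ?_⟩
      rw [filter_true_of_mem fun y hy => ?_, card_insert_of_notMem ha]
      rcases mem_insert.1 hy with rfl | hy
      exacts [le_rfl, hmax y hy]

section RmFrontier

open Finset

variable {α : Type*} {G : SimpleGraph α} {m : ℕ} {pos : Fin m × Option α → ℕ}

lemma exists_second_copy_time (hpos : Injective pos) (hm : 2 ≤ m) :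
    ∃ e : α → ℕ, Injective e ∧ ∀ v L,
      (e v ≤ L → 2 ≤ #{i | pos (i, some v) ≤ L}) ∧
      (L ≤ e v → #{i | pos (i, some v) ≤ L} ≤ 2) := by
  have hsecond v := (univ : Finset (Fin m)).exists_card_filter_le_eq (fun i => pos (i, some v))
    (hpos.comp (Prod.mk_left_injective _)).injOn two_pos (by simpa using hm)
  choose x _ hx using hsecond
  have mono v {L L'} (h : L ≤ L') : #{i | pos (i, some v) ≤ L} ≤ #{i | pos (i, some v) ≤ L'} :=
    card_le_card (monotone_filter_right _ fun _ _ hi => hi.trans h)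
  refine ⟨fun v => pos (x v, some v), fun v w h => ?_, fun v L => ⟨fun h => ?_, fun h => ?_⟩⟩
  · simpa using congrArg Prod.snd (hpos h)
  · exact (hx v).ge.trans (mono v h)
  · exact (mono v h).trans (hx v).le

lemma exists_many_fresh_copies [Fintype α] (L : ℕ) (W : Set α)
    (hW : ∀ v ∈ W, #{i | pos (i, some v) ≤ L} ≤ 2) :
    ∃ Ω : Finset (Fin m), m ≤ #Ω + 2 * Fintype.card α ∧
      ∀ j ∈ Ω, ∀ v ∈ W, L < pos (j, some v) := by
  classical
  refine ⟨({j | ∀ v ∈ W, L < pos (j, some v)} : Finset (Fin m)), ?_,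
    fun j hj => (mem_filter.1 hj).2⟩
  have htouched : #{j | ¬ ∀ v ∈ W, L < pos (j, some v)} ≤ 2 * Fintype.card α :=
    calc _ ≤ #(W.toFinset.biUnion fun v => {i | pos (i, some v) ≤ L}) := by
          refine card_le_card fun j hj => ?_
          simp only [not_forall, not_lt, mem_filter, mem_univ, true_and] at hj
          obtain ⟨v, hv, hjv⟩ := hj
          exact mem_biUnion.2 ⟨v, Set.mem_toFinset.2 hv, mem_filter.2 ⟨mem_univ j, hjv⟩⟩
      _ ≤ ∑ v ∈ W.toFinset, 2 := card_biUnion_le.trans (sum_le_sum fun v hv =>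
          hW v (Set.mem_toFinset.1 hv))
      _ ≤ 2 * Fintype.card α := by
          rw [sum_const, smul_eq_mul, mul_comm]
          exact Nat.mul_le_mul_left 2 (card_le_univ _)
  have := card_filter_add_card_filter_not (s := (univ : Finset (Fin m)))
    (fun j => ∀ v ∈ W, L < pos (j, some v))
  rw [card_univ, Fintype.card_fin] at this
  omega

lemma mem_openNbhd_of_two_copies {L : ℕ} {x u : α} (hx : 2 ≤ #{i | pos (i, some x) ≤ L})
    (hxu : G.Adj x u) (j : Fin m) : (j, some u) ∈ (Rm G m).openNbhd {p | pos p ≤ L} := by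
  obtain ⟨i₁, hi₁, i₂, hi₂, hne⟩ := one_lt_card.1 hx
  obtain ⟨i, hi, hij⟩ : ∃ i ∈ ({i | pos (i, some x) ≤ L} : Finset _), i ≠ j := by
    by_cases h : i₁ = j
    · exact ⟨i₂, hi₂, h ▸ hne.symm⟩
    · exact ⟨i₁, hi₁, h⟩
  exact ⟨(i, some x), (mem_filter.1 hi).2, rm_adj_some_some.2 ⟨hij, hxu⟩⟩

end RmFrontier

section RmHardCut

open Finset

variable {α : Type*} [Fintype α] {G : SimpleGraph α} {m : ℕ} {pos : Fin m × Option α → ℕ}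
  {a L : ℕ}

lemma exists_isHardCut_of_apexes_placed (hpos : Injective pos) (hχ : ¬ G.Colorable (a + 2))
    {W : Set α} (hW : ¬ (G.induce W).Colorable (a + 1)) (Ω : Finset (Fin m))
    (hΩ : Fintype.card α + 1 < #Ω) (hfresh : ∀ j ∈ Ω, ∀ v ∈ W, L < pos (j, some v))
    (hapex : ∀ j ∈ Ω, pos (j, none) ≤ L) :
    ∃ K, IsHardCut (Rm G m) pos (a + 1) K := by
  obtain ⟨j₁, hj₁, hcount⟩ := Ω.exists_card_filter_le_eq (fun j => pos (j, none))
    (hpos.comp (Prod.mk_left_injective _)).injOn (Nat.succ_pos _) hΩ.le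
  set K := pos (j₁, none)
  set Φ := {j ∈ Ω | pos (j, none) ≤ K}
  obtain ⟨j₂, hj₂, hj₂K⟩ := exists_mem_notMem_of_card_lt_card (s := Φ) (t := Ω) (by omega)
  replace hj₂K : K < pos (j₂, none) := lt_of_not_ge fun h => hj₂K (mem_filter.2 ⟨hj₂, h⟩)
  have hKL : K ≤ L := hapex j₁ hj₁
  have hΦ : ∀ j ∈ Φ, ∀ v, (j, some v) ∈ (Rm G m).openNbhd {p | pos p ≤ K} := fun j hj v =>
    ⟨(j, none), (mem_filter.1 hj).2, rm_adj_none_some.2 rfl⟩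
  have hlate : ∀ j ∈ Ω, ∀ v ∈ W, K ≤ pos (j, some v) := fun j hj v hv =>
    hKL.trans (hfresh j hj v hv).le
  refine ⟨K, ⟨?_, ?_, ?_⟩⟩
  · exact Rm.not_colorable_of_copies Φ (by omega)
      (fun j hj v hv => ⟨hΦ j hj v, hlate j (mem_filter.1 hj).1 v hv⟩) hW
  · refine Rm.not_colorable_succ_of_copies (Ω.erase j₂) ?_ j₂ (notMem_erase j₂ Ω)
      (fun j hj v hv => hlate j (mem_of_mem_erase hj) v hv) (fun v hv => hlate j₂ hj₂ v hv)
      hj₂K.le hW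
    rw [card_erase_of_mem hj₂]
    omega
  · exact Rm.not_colorable_of_copies (W := Set.univ) Φ (by omega) (fun j hj v _ => hΦ j hj v)
      fun h => hχ (Colorable.of_hom_induce Hom.id (fun _ => Set.mem_univ _) h)

lemma Rm.frontier_not_colorable {Wn Ws : Set α}
    (hfront : ¬ (G.induce (Wn ∩ Ws)).Colorable a) (hWs : ¬ (G.induce Ws).Colorable (a + 1))
    (hWn : ¬ (G.induce Wn).Colorable (a + 1)) (Ω : Finset (Fin m))
    (hΩ : 2 * Fintype.card α < #Ω) (hfresh : ∀ j ∈ Ω, ∀ v ∈ Ws, L < pos (j, some v))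
    (hnbhd : ∀ u ∈ Wn, ∀ j, (j, some u) ∈ (Rm G m).openNbhd {p | pos p ≤ L}) :
    ¬ ((Rm G m).induce ((Rm G m).openNbhd {p | pos p ≤ L} ∩ {p | L ≤ pos p})).Colorable
      (a + 1) := by
  by_cases htouched : ∃ j ∈ Ω, (∃ u, pos (j, some u) ≤ L) ∧ L < pos (j, none)
  · obtain ⟨j, hj, ⟨u, hu⟩, hjL⟩ := htouched
    refine Rm.not_colorable_succ_of_copies (Ω.erase j) ?_ j (notMem_erase j Ω) ?_ ?_ ?_ hfront
    · rw [card_erase_of_mem hj]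
      omega
    · exact fun i hi w hw => ⟨hnbhd w hw.1 i, (hfresh i (mem_of_mem_erase hi) w hw.2).le⟩
    · exact fun w hw => ⟨hnbhd w hw.1 j, (hfresh j hj w hw.2).le⟩
    · exact ⟨⟨(j, some u), hu, rm_adj_some_none.2 rfl⟩, hjL.le⟩
  push Not at htouched
  by_cases hopened : Fintype.card α ≤ #{j ∈ Ω | pos (j, none) ≤ L}
  · refine Rm.not_colorable_of_copies _ hopened (fun j hj w hw => ?_) hWs
    obtain ⟨hjΩ, hjL⟩ := mem_filter.1 hj
    exact ⟨⟨(j, none), hjL, rm_adj_none_some.2 rfl⟩, (hfresh j hjΩ w hw).le⟩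
  · have := card_filter_add_card_filter_not (s := Ω) (fun j => pos (j, none) ≤ L)
    refine Rm.not_colorable_of_copies {j ∈ Ω | ¬ pos (j, none) ≤ L} (by omega)
      (fun j hj w hw => ?_) hWn
    obtain ⟨hjΩ, hjL⟩ := mem_filter.1 hj
    exact ⟨hnbhd w hw j, (not_le.1 fun h => hjL (htouched j hjΩ ⟨w, h⟩)).le⟩

lemma Rm.neighbors_not_colorable (hm : Fintype.card α < m) {W : Set α}
    (hW : ¬ (G.induce W).Colorable (a + 1))
    (hnbhd : ∀ u ∈ W, ∀ j, (j, some u) ∈ (Rm G m).openNbhd {p | pos p ≤ L})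
    {j : Fin m} {v : α} (hjv : pos (j, some v) ≤ L) :
    ¬ ((Rm G m).induce ((Rm G m).openNbhd {p | pos p ≤ L})).Colorable (a + 2) := by
  refine Rm.not_colorable_succ_of_copies (univ.erase j) ?_ j (notMem_erase j _)
    (fun i _ u hu => hnbhd u hu i) (fun u hu => hnbhd u hu j)
    ⟨(j, some v), hjv, rm_adj_some_none.2 rfl⟩ hW
  rw [card_erase_of_mem (mem_univ j), card_univ, Fintype.card_fin]
  omega

theorem HasHardFrontier.rm (hG : HasHardFrontier G a) (hχ : ¬ G.Colorable (a + 2)) :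
    HasHardFrontier (Rm G (4 * Fintype.card α + 20)) (a + 1) := by
  intro pos hpos
  obtain ⟨e, he, hcount⟩ := exists_second_copy_time hpos (by omega)
  obtain ⟨L, hcut⟩ := hG e he
  obtain ⟨Ω, hΩ, hfresh⟩ :=
    exists_many_fresh_copies L {v | L ≤ e v} fun v hv => (hcount v L).2 hv
  have hnbhd : ∀ u ∈ G.openNbhd {v | e v ≤ L}, ∀ j,
      (j, some u) ∈ (Rm G _).openNbhd {p | pos p ≤ L} := by
    rintro u ⟨x, hx, hxu⟩ j
    exact mem_openNbhd_of_two_copies ((hcount x L).1 hx) hxu j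
  by_cases hapex : ∀ j ∈ Ω, pos (j, none) ≤ L
  · exact exists_isHardCut_of_apexes_placed hpos hχ hcut.suffix Ω (by omega) hfresh hapex
  push Not at hapex
  obtain ⟨j₀, hj₀, hj₀L⟩ := hapex
  obtain ⟨-, x, hx, -⟩ := nonempty_of_not_colorable_induce hcut.neighbors
  obtain ⟨i, hi⟩ := card_pos.1 (two_pos.trans_le ((hcount x L).1 hx))
  refine ⟨L, Rm.frontier_not_colorable hcut.frontier hcut.suffix hcut.neighbors Ω (by omega)
    hfresh hnbhd, ?_,
    Rm.neighbors_not_colorable (by omega) hcut.neighbors hnbhd (mem_filter.1 hi).2⟩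
  refine Rm.not_colorable_succ_of_copies (Ω.erase j₀) ?_ j₀ (notMem_erase j₀ Ω)
    (fun j hj v hv => (hfresh j (mem_of_mem_erase hj) v hv).le)
    (fun v hv => (hfresh j₀ hj₀ v hv).le) hj₀L.le hcut.suffix
  rw [card_erase_of_mem hj₀]
  omega

end RmHardCut

section MycielskiEmbedding

variable {α β : Type*} {H : SimpleGraph α} {M : SimpleGraph β}

lemma exists_rm_hom_mycielskian {t : ℕ} (A : H →g M) (B : Rm H t →g M)
    (hAB : ∀ j u v, H.Adj u v → M.Adj (A u) (B (j, some v))) :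
    ∃ (A' : H →g mycielskian M) (B' : Rm H (t + 1) →g mycielskian M),
      ∀ j u v, H.Adj u v → (mycielskian M).Adj (A' u) (B' (j, some v)) := by
  -- the new last copy goes to the shadows of `A`, its apex to the Mycielski apex
  let B' : Fin (t + 1) × Option α → Option (β ⊕ β) := fun p =>
    Fin.lastCases (p.2.map (.inr ∘ A)) (fun i => some (.inl (B (i, p.2)))) p.1
  refine ⟨⟨fun u => some (.inl (A u)), fun h => by simpa using A.map_adj h⟩,
    ⟨B', ?_⟩, fun j u v h => ?_⟩
  · rintro ⟨i, x⟩ ⟨j, y⟩ h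
    induction i using Fin.lastCases <;> induction j using Fin.lastCases <;>
      rcases x with _ | u <;> rcases y with _ | v <;>
      simp_all [B', Fin.castSucc_ne_last, (Fin.castSucc_ne_last _).symm]
    all_goals first
      | exact (hAB _ _ _ h.symm).symm
      | exact B.map_adj (by simp_all)
  · induction j using Fin.lastCases
    · simpa [B'] using A.map_adj h
    · simpa [B'] using hAB _ _ _ h

lemma exists_rm_hom_myc {s : ℕ} (A : H →g Myc (s + 2)) (t : ℕ) :
    ∃ s', Nonempty (Rm H t →g Myc (s' + 2)) := by
  suffices ∃ s', ∃ A' : H →g Myc (s' + 2), ∃ B : Rm H t →g Myc (s' + 2),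
      ∀ j u v, H.Adj u v → (Myc (s' + 2)).Adj (A' u) (B (j, some v)) by
    obtain ⟨s', -, B, -⟩ := this
    exact ⟨s', ⟨B⟩⟩
  induction t with
  | zero => exact ⟨s, A, ⟨fun p => p.1.elim0, fun {p} => p.1.elim0⟩, fun j => j.elim0⟩
  | succ t ih =>
    obtain ⟨s', A', B, hAB⟩ := ih
    obtain ⟨A'', B', hAB'⟩ := exists_rm_hom_mycielskian A' B hAB
    exact ⟨s' + 1, A'', B', hAB'⟩

end MycielskiEmbedding

theorem finite_mycV : ∀ k, Finite (MycV k)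
  | 0 => inferInstanceAs (Finite Empty)
  | 1 => inferInstanceAs (Finite Empty)
  | 2 => inferInstanceAs (Finite (Fin 2))
  | k + 3 =>
    have := finite_mycV (k + 2)
    inferInstanceAs (Finite (Option (MycV (k + 2) ⊕ MycV (k + 2))))

instance (k : ℕ) : Finite (MycV k) := finite_mycV k

theorem not_colorable_two_myc_three : ¬ (Myc 3).Colorable 2 := fun h =>
  let ⟨C⟩ := Colorable.of_mycielskian (H := (⊤ : SimpleGraph (Fin 2))) h
  C.valid ((top_adj 0 1).2 (by decide) : (⊤ : SimpleGraph (Fin 2)).Adj 0 1)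
    (Subsingleton.elim _ _)

theorem hasHardFrontier_myc_three : HasHardFrontier (Myc 3) 0 := by
  let C₅ := mycielskian (⊤ : SimpleGraph (Fin 2))
  have nbhd_nonempty : ∀ u v, u ≠ v → ∃ w, w ≠ u ∧ (C₅.Adj u w ∨ C₅.Adj v w) := by decide
  have edge_avoiding : ∀ u, ∃ w₁ w₂, w₁ ≠ u ∧ w₂ ≠ u ∧ C₅.Adj w₁ w₂ := by decide
  have edge_in_nbhd : ∀ u v, u ≠ v → ∃ w₁ w₂,
      (C₅.Adj u w₁ ∨ C₅.Adj v w₁) ∧ (C₅.Adj u w₂ ∨ C₅.Adj v w₂) ∧ C₅.Adj w₁ w₂ := by decide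
  change HasHardFrontier C₅ 0
  intro pos _
  obtain ⟨u, -, hu⟩ := Set.exists_min_image Set.univ pos Set.finite_univ Set.univ_nonempty
  obtain ⟨w₁, -, hw₁, -⟩ := edge_avoiding u
  obtain ⟨v, hvu, hv⟩ := Set.exists_min_image {w | w ≠ u} pos (Set.toFinite _) ⟨w₁, hw₁⟩
  have mem_nbhd : ∀ w, C₅.Adj u w ∨ C₅.Adj v w → w ∈ C₅.openNbhd {x | pos x ≤ pos v} := by
    rintro w (h | h)
    exacts [⟨u, hu v trivial, h⟩, ⟨v, le_refl (pos v), h⟩]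
  refine ⟨pos v, ⟨?_, ?_, ?_⟩⟩
  · obtain ⟨w, hwu, hw⟩ := nbhd_nonempty u v (Ne.symm hvu)
    exact fun h => (colorable_zero_iff.1 h).false ⟨w, mem_nbhd w hw, hv w hwu⟩
  · obtain ⟨w₁, w₂, h₁, h₂, hw⟩ := edge_avoiding u
    exact not_colorable_one_induce_of_adj (hv w₁ h₁) (hv w₂ h₂) hw
  · obtain ⟨w₁, w₂, h₁, h₂, hw⟩ := edge_in_nbhd u v (Ne.symm hvu)
    exact not_colorable_one_induce_of_adj (mem_nbhd w₁ h₁) (mem_nbhd w₂ h₂) hw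

theorem exists_hasHardFrontier_hom_myc (c : ℕ) :
    ∃ (α : Type) (_ : Fintype α) (G : SimpleGraph α), HasHardFrontier G c ∧
      ¬ G.Colorable (c + 2) ∧ ∃ s, Nonempty (G →g Myc (s + 2)) := by
  induction c with
  | zero => exact ⟨MycV 3, Fintype.ofFinite _, Myc 3, hasHardFrontier_myc_three,
      not_colorable_two_myc_three, 1, ⟨Hom.id⟩⟩
  | succ c ih =>
    obtain ⟨α, _, G, hG, hχ, s, ⟨A⟩⟩ := ih
    obtain ⟨s', hB⟩ := exists_rm_hom_myc A (4 * Fintype.card α + 20)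
    exact ⟨_, inferInstance, _, hG.rm hχ, Rm.not_colorable_succ (by omega) hχ, s', hB⟩

lemma exists_injective_le_imp_le {α : Type*} [Finite α] (f : α → ℕ) :
    ∃ pos : α → ℕ, Injective pos ∧ ∀ u v, pos u ≤ pos v → f u ≤ f v := by
  cases nonempty_fintype α
  let idx := Fintype.equivFin α
  have hle : ∀ u v,
      f u * Fintype.card α + idx u ≤ f v * Fintype.card α + idx v → f u ≤ f v := by
    intro u v h
    by_contra! hlt
    have := Nat.mul_le_mul_right (Fintype.card α) (Nat.succ_le_of_lt hlt)
    rw [Nat.succ_mul] at this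
    have := (idx v).isLt
    omega
  refine ⟨fun v => f v * Fintype.card α + idx v, fun u v h => idx.injective (Fin.ext ?_), hle⟩
  have := (hle u v h.le).antisymm (hle v u h.ge)
  simp only [this] at h
  omega

section PathDecomposition

variable {β : Type*} {Γ : SimpleGraph β}

lemma IsPathDecomp.exists_last_bag {s : ℕ} {B : Fin s → Set β} (hB : IsPathDecomp Γ B)
    (x : β) : ∃ t, x ∈ B t ∧ ∀ t', x ∈ B t' → t' ≤ t := by
  obtain ⟨t, ht⟩ := hB.1 x
  obtain ⟨t, ht, hmax⟩ := Set.exists_max_image {t | x ∈ B t} id (Set.toFinite _) ⟨t, ht⟩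
  exact ⟨t, ht, hmax⟩

lemma exists_pathDecomp_colorable_pathChromatic [Finite β] (Γ : SimpleGraph β) :
    ∃ (s : ℕ) (B : Fin s → Set β), IsPathDecomp Γ B ∧
      ∀ t, (Γ.induce (B t)).Colorable (pathChromatic Γ) := by
  cases nonempty_fintype β
  have hne : Set.Nonempty {k | ∃ (s : ℕ) (B : Fin s → Set β), IsPathDecomp Γ B ∧
      ∀ t, (Γ.induce (B t)).Colorable k} := by
    refine ⟨Fintype.card β, 1, fun _ => Set.univ, ⟨?_, ?_, ?_⟩, fun _ => ?_⟩
    · exact fun v => ⟨0, Set.mem_univ v⟩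
    · exact fun u v _ => ⟨0, Set.mem_univ u, Set.mem_univ v⟩
    · exact fun v _ _ _ _ _ _ _ => Set.mem_univ v
    · exact (colorable_of_fintype Γ).of_hom (induceUnivIso Γ).toHom
  exact Nat.sInf_mem hne

variable {α : Type*} [Finite α] {G : SimpleGraph α} {c : ℕ}

theorem HasHardFrontier.exists_bag_not_colorable (hG : HasHardFrontier G c) (F : G →g Γ)
    {s : ℕ} {B : Fin s → Set β} (hB : IsPathDecomp Γ B) :
    ∃ t, ¬ (Γ.induce (B t)).Colorable c := by
  choose r hr hrmax using hB.exists_last_bag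
  obtain ⟨pos, hpos, hmono⟩ := exists_injective_le_imp_le fun v => (r (F v) : ℕ)
  obtain ⟨k, hcut⟩ := hG pos hpos
  obtain ⟨w₀, hw₀, hmin⟩ := Set.exists_min_image {v | k ≤ pos v} pos (Set.toFinite _)
    (nonempty_of_not_colorable_induce hcut.suffix)
  refine ⟨r (F w₀), fun h => hcut.frontier
    (Colorable.of_hom_induce (F.comp (Embedding.induce _).toHom) ?_ h)⟩
  rintro ⟨w, ⟨y, hy, hyw⟩, hw⟩
  obtain ⟨t, hyt, hwt⟩ := hB.2.1 _ _ (F.map_adj hyw)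
  refine hB.2.2 (F w) t _ (r (F w)) ((hrmax _ t hyt).trans ?_) (hmono _ _ (hmin w hw))
    hwt (hr _)
  exact hmono _ _ (le_trans hy hw₀)

theorem HasHardFrontier.lt_pathChromatic [Finite β] (hG : HasHardFrontier G c) (F : G →g Γ) :
    c < pathChromatic Γ := by
  obtain ⟨s, B, hB, hcol⟩ := exists_pathDecomp_colorable_pathChromatic Γ
  obtain ⟨t, ht⟩ := hG.exists_bag_not_colorable F hB
  by_contra! hle
  exact ht ((hcol t).mono hle)

end PathDecomposition

theorem stmt_17_general (c : ℕ) : ∃ N : ℕ, c < pathChromatic (Myc N) := by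
  obtain ⟨α, _, G, hG, -, s, ⟨F⟩⟩ := exists_hasHardFrontier_hom_myc c
  exact ⟨s + 2, hG.lt_pathChromatic F⟩

/-- Corollary 5: for every positive integer `c` there is `N` with `χ_P(M_N) > c`. -/
theorem stmt_17 (c : ℕ) (hc : 1 ≤ c) :
    ∃ N : ℕ, c < pathChromatic (Myc N) :=
  stmt_17_general c
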